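/- arXiv:gr-qc/0407094 — 4 statements merged into one kernel-verified Lean document; each statement's English description precedes it below -/
import Mathlib

section
/- X has a countable basis (as a continuous poset) if and only if the interval domain IX is ω-continuous. -/
open Set

/-- `a` is way below `x`. -/
def wayBelow {α : Type*} [Preorder α] (a x : α) : Prop :=
  ∀ S : Set α, S.Nonempty → DirectedOn (· ≤ ·) S → ∀ d, IsLUB S d → x ≤ d →
    ∃ s ∈ S, a ≤ s

/-- A poset is continuous if every element is the supremum of a directed set
of elements way below it. -/
def ContinuousPoset (α : Type*) [Preorder α] : Prop :=
  ∀ x : α, ∃ S : Set α, S ⊆ {a | wayBelow a x} ∧ S.Nonempty ∧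
    DirectedOn (· ≤ ·) S ∧ IsLUB S x

/-- A basis for a continuous poset. -/
def PosetBasis {α : Type*} [Preorder α] (B : Set α) : Prop :=
  ∀ x : α, ∃ S : Set α, S ⊆ B ∩ {a | wayBelow a x} ∧ S.Nonempty ∧
    DirectedOn (· ≤ ·) S ∧ IsLUB S x

/-- Scott open sets: upper sets inaccessible by directed suprema. -/
def ScottOpen {α : Type*} [Preorder α] (U : Set α) : Prop :=
  IsUpperSet U ∧ ∀ S : Set α, S.Nonempty → DirectedOn (· ≤ ·) S → ∀ d, IsLUB S d →
    d ∈ U → (S ∩ U).Nonempty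

/-- The Scott topology. -/
def scottTop (α : Type*) [Preorder α] : TopologicalSpace α :=
  TopologicalSpace.generateFrom {U | ScottOpen U}

/-- A bicontinuous poset. -/
def Bicontinuous (α : Type*) [Preorder α] : Prop :=
  ContinuousPoset α ∧
  (∀ x y : α, wayBelow x y ↔
    ∀ S : Set α, S.Nonempty → DirectedOn (· ≥ ·) S → ∀ i, IsGLB S i → i ≤ x →
      ∃ s ∈ S, s ≤ y) ∧
  (∀ x : α, DirectedOn (· ≥ ·) {y | wayBelow x y} ∧ IsGLB {y | wayBelow x y} x)

/-- The basic open intervals `(a,b) = {x | a ≪ x ≪ b}`. -/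
def intervalBasis (α : Type*) [Preorder α] : Set (Set α) :=
  {s | ∃ a b : α, s = {x | wayBelow a x ∧ wayBelow x b}}

/-- The interval topology, generated by the sets `(a,b)`. -/
def intervalTop (α : Type*) [Preorder α] : TopologicalSpace α :=
  TopologicalSpace.generateFrom (intervalBasis α)

/-- A globally hyperbolic poset: bicontinuous, with compact closed intervals. -/
def GloballyHyperbolic (α : Type*) [PartialOrder α] : Prop :=
  Bicontinuous α ∧ ∀ a b : α, @IsCompact α (intervalTop α) (Set.Icc a b)

/-- The poset of closed intervals `[a,b]`, `a ≤ b`, under reverse inclusion. -/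
def IX (α : Type*) [PartialOrder α] := {p : α × α // p.1 ≤ p.2}

instance IX.instPartialOrder {α : Type*} [PartialOrder α] : PartialOrder (IX α) where
  le x y := x.1.1 ≤ y.1.1 ∧ y.1.2 ≤ x.1.2
  le_refl x := ⟨le_refl _, le_refl _⟩
  le_trans x y z h1 h2 := ⟨h1.1.trans h2.1, h2.2.trans h1.2⟩
  le_antisymm x y h1 h2 :=
    Subtype.ext (Prod.ext_iff.mpr ⟨le_antisymm h1.1 h2.1, le_antisymm h2.2 h1.2⟩)

section Rel

variable {β : Type*}

/-- Directedness with respect to an arbitrary relation. -/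
def relDirectedOn (r : β → β → Prop) (S : Set β) : Prop :=
  ∀ x ∈ S, ∀ y ∈ S, ∃ z ∈ S, r x z ∧ r y z

/-- Least upper bound with respect to an arbitrary relation. -/
def relIsLUB (r : β → β → Prop) (S : Set β) (d : β) : Prop :=
  (∀ s ∈ S, r s d) ∧ ∀ u, (∀ s ∈ S, r s u) → r d u

/-- The way-below relation with respect to an arbitrary relation. -/
def relWayBelow (r : β → β → Prop) (a x : β) : Prop :=
  ∀ S : Set β, S.Nonempty → relDirectedOn r S → ∀ d, relIsLUB r S d → r x d →
    ∃ s ∈ S, r a s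

/-- An abstract basis: a transitive relation, interpolative from the `-` direction. -/
def AbstractBasis (r : β → β → Prop) : Prop :=
  Transitive r ∧ ∀ (F : Finset β) (x : β), (∀ y ∈ F, r y x) →
    ∃ z, (∀ y ∈ F, r y z) ∧ r z x

/-- Interpolation in the `+` direction. -/
def PlusInterpolative (r : β → β → Prop) : Prop :=
  ∀ (F : Finset β) (x : β), (∀ y ∈ F, r x y) → ∃ z, r x z ∧ (∀ y ∈ F, r z y)

/-- An ideal: a nonempty directed lower set. -/
def IsIdeal (r : β → β → Prop) (I : Set β) : Prop :=
  I.Nonempty ∧ (∀ x y, r x y → y ∈ I → x ∈ I) ∧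
    ∀ x ∈ I, ∀ y ∈ I, ∃ z ∈ I, r x z ∧ r y z

/-- The ideal completion: ideals ordered by inclusion. -/
def IdealCompletion (r : β → β → Prop) := {I : Set β // IsIdeal r I}

instance IdealCompletion.instPartialOrder {β : Type*} (r : β → β → Prop) :
    PartialOrder (IdealCompletion r) where
  le I J := I.1 ⊆ J.1
  le_refl I := subset_rfl
  le_trans I J K h1 h2 := Set.Subset.trans h1 h2
  le_antisymm I J h1 h2 := Subtype.ext (Set.Subset.antisymm h1 h2)

end Rel

/-- The order on maximal elements induced by interval endpoints. -/
def maxLe {α : Type*} (left right : α → α) (a b : α) : Prop :=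
  ∃ x, left x = a ∧ right x = b

/-- An interval poset. -/
structure IntervalPoset (α : Type*) [PartialOrder α] where
  left : α → α
  right : α → α
  left_max : ∀ x, IsMax (left x)
  right_max : ∀ x, IsMax (right x)
  glb : ∀ x, IsGLB {left x, right x} x
  glue : ∀ x y, right x = left y →
    ∃ z, IsGLB {x, y} z ∧ left z = left x ∧ right z = right y
  sub_left : ∀ x p, IsMax p → x ≤ p →
    ∃ z, IsGLB {left x, p} z ∧ left z = left x ∧ right z = p
  sub_right : ∀ x p, IsMax p → x ≤ p →
    ∃ z, IsGLB {p, right x} z ∧ left z = p ∧ right z = right x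

/-- An interval domain. -/
structure IntervalDomain (α : Type*) [PartialOrder α] extends IntervalPoset α where
  dcpo : ∀ S : Set α, S.Nonempty → DirectedOn (· ≤ ·) S → ∃ d, IsLUB S d
  cont : ContinuousPoset α
  ax1 : ∀ x p, IsMax p → wayBelow x p →
    (∀ z, IsGLB {left x, p} z → ∃ u, wayBelow z u) ∧
    (∀ z, IsGLB {p, right x} z → ∃ u, wayBelow z u)
  ax2b : ∀ x : α, (∃ u, wayBelow x u) ↔
    (∀ y, left y = left x → y ≤ x →
      relWayBelow (fun u v => u ≤ v ∧ right u = right y ∧ right v = right y) y (right y))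
  ax2c : ∀ x : α, (∃ u, wayBelow x u) ↔
    (∀ y, right y = right x → y ≤ x →
      relWayBelow (fun u v => u ≤ v ∧ left u = left y ∧ left v = left y) y (left y))
  ax3a : ∀ (p : α) (S : Set α), S.Nonempty → S ⊆ {z | left z = p} →
    DirectedOn (· ≤ ·) S → ∀ u, IsLUB S u →
      left u = p ∧ ∀ (q : α) (T : Set α), T.Nonempty → T ⊆ {z | left z = q} →
        DirectedOn (· ≤ ·) T → ∀ v, IsLUB T v → right '' T = right '' S →
          right u = right v
  ax3b : ∀ (q : α) (S : Set α), S.Nonempty → S ⊆ {z | right z = q} →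
    DirectedOn (· ≤ ·) S → ∀ u, IsLUB S u →
      right u = q ∧ ∀ (p : α) (T : Set α), T.Nonempty → T ⊆ {z | right z = p} →
        DirectedOn (· ≤ ·) T → ∀ v, IsLUB T v → left '' T = left '' S →
          left u = left v
  ax4 : ∀ x : α, @IsCompact α (scottTop α) ({y | x ≤ y} ∩ {y | IsMax y})

/-!
In the interval topology of a bicontinuous poset the sets `↑l` and `↓u` are closed, so
compactness of the closed intervals forces any two upper bounds of a nonempty directed set to
dominate a common upper bound. Hence directed suprema in `IX` are computed endpointwise, and
`[a,b] ≪ [c,d]` iff `a ≪ c` and `d ≪ b`. A countable basis `B` of `X` yields a countable set `C`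
of "way-above" approximants (one chosen witness `a ≪ c ≤ b` per pair `a, b ∈ B`), and the
intervals with left endpoint in `B` and right endpoint in `C` form a countable basis of `IX`.
Conversely, the left endpoints of a countable basis of `IX` form a basis of `X`, approximating
`x` through `[x,x]`.
-/

open Topology

section WayBelow

variable {α : Type*} [Preorder α] {a a' x y : α}

lemma wayBelow.le (h : wayBelow a x) : a ≤ x := by
  obtain ⟨s, rfl, hs⟩ := h {x} (singleton_nonempty x) (directedOn_singleton x) x
    isLUB_singleton le_rfl
  exact hs

lemma wayBelow.trans_le (h : wayBelow a x) (hxy : x ≤ y) : wayBelow a y :=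
  fun S hne hd d hS hyd => h S hne hd d hS (hxy.trans hyd)

lemma LE.le.trans_wayBelow (h : a' ≤ a) (ha : wayBelow a x) : wayBelow a' x :=
  fun S hne hd d hS hxd =>
    let ⟨s, hs, has⟩ := ha S hne hd d hS hxd
    ⟨s, hs, h.trans has⟩

lemma wayBelow.exists_le {S : Set α} (h : wayBelow a x) (hne : S.Nonempty)
    (hd : DirectedOn (· ≤ ·) S) (hS : IsLUB S x) : ∃ s ∈ S, a ≤ s :=
  h S hne hd x hS le_rfl

namespace ContinuousPoset

variable (hc : ContinuousPoset α)
include hc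

lemma nonempty_wayBelow (x : α) : {a | wayBelow a x}.Nonempty :=
  let ⟨_, hS, hne, _⟩ := hc x
  hne.mono hS

lemma isLUB_wayBelow (x : α) : IsLUB {a | wayBelow a x} x := by
  obtain ⟨S, hS, -, -, hlub⟩ := hc x
  exact ⟨fun a ha => wayBelow.le ha, fun u hu => hlub.2 fun s hs => hu (hS hs)⟩

lemma directedOn_wayBelow (x : α) : DirectedOn (· ≤ ·) {a | wayBelow a x} := by
  obtain ⟨S, hS, hne, hd, hlub⟩ := hc x
  intro a ha b hb
  obtain ⟨s, hs, has⟩ := wayBelow.exists_le ha hne hd hlub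
  obtain ⟨t, ht, hbt⟩ := wayBelow.exists_le hb hne hd hlub
  obtain ⟨z, hz, hsz, htz⟩ := hd s hs t ht
  exact ⟨z, hS hz, has.trans hsz, hbt.trans htz⟩

lemma exists_wayBelow_wayBelow (h : wayBelow x y) : ∃ z, wayBelow x z ∧ wayBelow z y := by
  set S : Set α := {a | ∃ b, wayBelow a b ∧ wayBelow b y}
  have hne : S.Nonempty := by
    obtain ⟨b, hb⟩ := hc.nonempty_wayBelow y
    obtain ⟨a, ha⟩ := hc.nonempty_wayBelow b
    exact ⟨a, b, ha, hb⟩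
  have hd : DirectedOn (· ≤ ·) S := by
    rintro a₁ ⟨b₁, hab₁, hb₁⟩ a₂ ⟨b₂, hab₂, hb₂⟩
    obtain ⟨b, hb, hb₁b, hb₂b⟩ := hc.directedOn_wayBelow y b₁ hb₁ b₂ hb₂
    have hbne := hc.nonempty_wayBelow b
    have hbd := hc.directedOn_wayBelow b
    have hbl := hc.isLUB_wayBelow b
    obtain ⟨s₁, hs₁, has₁⟩ := (hab₁.trans_le hb₁b).exists_le hbne hbd hbl
    obtain ⟨s₂, hs₂, has₂⟩ := (hab₂.trans_le hb₂b).exists_le hbne hbd hbl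
    obtain ⟨s, hs, hs₁s, hs₂s⟩ := hbd s₁ hs₁ s₂ hs₂
    exact ⟨s, ⟨b, hs, hb⟩, has₁.trans hs₁s, has₂.trans hs₂s⟩
  have hlub : IsLUB S y := by
    refine ⟨fun a ⟨b, hab, hby⟩ => hab.le.trans hby.le, fun u hu => ?_⟩
    exact (hc.isLUB_wayBelow y).2 fun b hb => (hc.isLUB_wayBelow b).2 fun a ha => hu ⟨b, ha, hb⟩
  obtain ⟨a, ⟨b, hab, hby⟩, hxa⟩ := h.exists_le hne hd hlub
  exact ⟨b, hxa.trans_wayBelow hab, hby⟩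

lemma exists_countable_wayBelow_le {B : Set α} (hBc : B.Countable) (hB : PosetBasis B) :
    ∃ C : Set α, C.Countable ∧ ∀ ⦃x y⦄, wayBelow x y → ∃ c ∈ C, wayBelow x c ∧ c ≤ y := by
  have hwitness : ∀ p : α × α, ∃ c, (∃ z, wayBelow p.1 z ∧ z ≤ p.2) →
      wayBelow p.1 c ∧ c ≤ p.2 := fun p => by
    by_cases hp : ∃ z, wayBelow p.1 z ∧ z ≤ p.2
    exacts [⟨hp.choose, fun _ => hp.choose_spec⟩, ⟨p.1, fun h => absurd h hp⟩]
  choose f hf using hwitness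
  refine ⟨f '' (B ×ˢ B), (hBc.prod hBc).image f, fun x y hxy => ?_⟩
  obtain ⟨z, hxz, hzy⟩ := hc.exists_wayBelow_wayBelow hxy
  obtain ⟨Sz, hSz, hSzne, hSzd, hSzl⟩ := hB z
  obtain ⟨a, ha, hxa⟩ := hxz.exists_le hSzne hSzd hSzl
  obtain ⟨Sy, hSy, hSyne, hSyd, hSyl⟩ := hB y
  obtain ⟨b, hb, hzb⟩ := hzy.exists_le hSyne hSyd hSyl
  obtain ⟨hac, hcb⟩ := hf (a, b) ⟨z, (hSz ha).2, hzb⟩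
  exact ⟨f (a, b), mem_image_of_mem f ⟨(hSz ha).1, (hSy hb).1⟩, hxa.trans_wayBelow hac,
    hcb.trans (hSy hb).2.le⟩

end ContinuousPoset

lemma isOpen_wayBetween (a b : α) : IsOpen[intervalTop α] {x | wayBelow a x ∧ wayBelow x b} :=
  .basic _ ⟨a, b, rfl⟩

namespace Bicontinuous

variable (hb : Bicontinuous α)
include hb

lemma directedOn_wayAbove (x : α) : DirectedOn (· ≥ ·) {y | wayBelow x y} :=
  (hb.2.2 x).1

lemma isGLB_wayAbove (x : α) : IsGLB {y | wayBelow x y} x :=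
  (hb.2.2 x).2

-- If nothing were way above `x`, then `x` would be the top element, hence way below itself.
lemma nonempty_wayAbove (x : α) : {y | wayBelow x y}.Nonempty := by
  by_contra hempty
  rw [not_nonempty_iff_eq_empty] at hempty
  have htop : ∀ y, y ≤ x := fun y =>
    (hb.isGLB_wayAbove x).2 (by rw [hempty]; exact fun _ h => h.elim)
  have hxx : wayBelow x x :=
    (hb.2.1 x x).2 fun S hne _ _ _ _ => ⟨hne.some, hne.some_mem, htop _⟩
  exact (hempty ▸ hxx : x ∈ (∅ : Set α))

lemma exists_countable_coBasis {B : Set α} (hBc : B.Countable) (hB : PosetBasis B) :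
    ∃ C : Set α, C.Countable ∧ ∀ y, ∃ R ⊆ C ∩ {b | wayBelow y b},
      R.Nonempty ∧ DirectedOn (· ≥ ·) R ∧ IsGLB R y := by
  obtain ⟨C, hCc, hC⟩ := hb.1.exists_countable_wayBelow_le hBc hB
  refine ⟨C, hCc, fun y => ⟨C ∩ {b | wayBelow y b}, subset_rfl, ?_, ?_, ?_⟩⟩
  · obtain ⟨w, hw⟩ := hb.nonempty_wayAbove y
    obtain ⟨c, hc, hyc, -⟩ := hC hw
    exact ⟨c, hc, hyc⟩
  · rintro b₁ ⟨-, hb₁⟩ b₂ ⟨-, hb₂⟩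
    obtain ⟨w, hw, hw₁, hw₂⟩ := hb.directedOn_wayAbove y b₁ hb₁ b₂ hb₂
    obtain ⟨c, hc, hyc, hcw⟩ := hC hw
    exact ⟨c, ⟨hc, hyc⟩, hcw.trans hw₁, hcw.trans hw₂⟩
  · refine ⟨fun b hb => hb.2.le, fun l hl => (hb.isGLB_wayAbove y).2 fun w hw => ?_⟩
    obtain ⟨c, hc, hyc, hcw⟩ := hC hw
    exact (hl ⟨hc, hyc⟩).trans hcw

lemma isClosed_Ici (l : α) : IsClosed[intervalTop α] (Ici l) := by
  let := intervalTop α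
  refine isOpen_compl_iff.1 (isOpen_iff_forall_mem_open.2 fun x (hx : ¬ l ≤ x) => ?_)
  obtain ⟨w, hxw, hlw⟩ : ∃ w, wayBelow x w ∧ ¬ l ≤ w := by
    by_contra! hcon
    exact hx ((hb.isGLB_wayAbove x).2 fun w hw => hcon w hw)
  obtain ⟨z, hzx⟩ := hb.1.nonempty_wayBelow x
  exact ⟨_, fun y hy (hly : l ≤ y) => hlw (hly.trans hy.2.le), isOpen_wayBetween z w,
    hzx, hxw⟩

lemma isClosed_Iic (u : α) : IsClosed[intervalTop α] (Iic u) := by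
  let := intervalTop α
  refine isOpen_compl_iff.1 (isOpen_iff_forall_mem_open.2 fun x (hx : ¬ x ≤ u) => ?_)
  obtain ⟨z, hzx, hzu⟩ : ∃ z, wayBelow z x ∧ ¬ z ≤ u := by
    by_contra! hcon
    exact hx ((hb.1.isLUB_wayBelow x).2 fun z hz => hcon z hz)
  obtain ⟨w, hxw⟩ := hb.nonempty_wayAbove x
  exact ⟨_, fun y hy (hyu : y ≤ u) => hzu (hy.1.le.trans hyu), isOpen_wayBetween z w,
    hzx, hxw⟩

end Bicontinuous

end WayBelow

section CompactIcc

variable {α : Type*} [Preorder α] [TopologicalSpace α] [ClosedIciTopology α]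
  [ClosedIicTopology α] [CompactIccSpace α] {F : Set α}

-- Upper bounds `u`, `v` dominate any point of `⋂ s ∈ F, [s, u] ∩ ↓v`, an intersection of a
-- directed family of nonempty compact sets.
lemma DirectedOn.directedOn_ge_upperBounds (hd : DirectedOn (· ≤ ·) F) (hne : F.Nonempty) :
    DirectedOn (· ≥ ·) (upperBounds F) := by
  intro u hu v hv
  have : Nonempty F := hne.to_subtype
  have hdir : Directed (· ⊇ ·) fun s : F => Icc (s : α) u ∩ Iic v := fun s t => by
    obtain ⟨z, hz, hsz, htz⟩ := hd s s.2 t t.2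
    exact ⟨⟨z, hz⟩, fun w hw => ⟨⟨hsz.trans hw.1.1, hw.1.2⟩, hw.2⟩,
      fun w hw => ⟨⟨htz.trans hw.1.1, hw.1.2⟩, hw.2⟩⟩
  obtain ⟨w, hw⟩ := IsCompact.nonempty_iInter_of_directed_nonempty_isCompact_isClosed _ hdir
    (fun s => ⟨s, ⟨le_rfl, hu s.2⟩, hv s.2⟩)
    (fun _ => isCompact_Icc.inter_right isClosed_Iic)
    (fun _ => (isClosed_Ici.inter isClosed_Iic).inter isClosed_Iic)
  rw [mem_iInter] at hw
  have hw₀ := hw ⟨_, hne.some_mem⟩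
  exact ⟨w, fun s hs => (hw ⟨s, hs⟩).1.1, hw₀.1.2, hw₀.2⟩

lemma DirectedOn.directedOn_le_lowerBounds (hd : DirectedOn (· ≥ ·) F) (hne : F.Nonempty) :
    DirectedOn (· ≤ ·) (lowerBounds F) :=
  DirectedOn.directedOn_ge_upperBounds (α := αᵒᵈ) hd hne

end CompactIcc

namespace IX

variable {α : Type*} [PartialOrder α]

def left (s : IX α) : α := s.1.1

def right (s : IX α) : α := s.1.2

lemma left_le_right (s : IX α) : s.left ≤ s.right := s.2

lemma directedOn_left_image {S : Set (IX α)} (hd : DirectedOn (· ≤ ·) S) :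
    DirectedOn (· ≤ ·) (left '' S) :=
  hd.mono_comp fun _ _ hst => hst.1

lemma directedOn_right_image {S : Set (IX α)} (hd : DirectedOn (· ≤ ·) S) :
    DirectedOn (· ≥ ·) (right '' S) :=
  hd.mono_comp fun _ _ hst => hst.2

def withEndpointsIn (L R : Set α) : Set (IX α) := {s | s.left ∈ L ∧ s.right ∈ R}

section Endpoints

variable {L R : Set α}

lemma nonempty_withEndpointsIn (hL : L.Nonempty) (hR : R.Nonempty)
    (hLR : ∀ a ∈ L, ∀ b ∈ R, a ≤ b) : (withEndpointsIn L R).Nonempty :=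
  let ⟨a, ha⟩ := hL
  let ⟨b, hb⟩ := hR
  ⟨⟨(a, b), hLR a ha b hb⟩, ha, hb⟩

lemma directedOn_withEndpointsIn (hL : DirectedOn (· ≤ ·) L) (hR : DirectedOn (· ≥ ·) R)
    (hLR : ∀ a ∈ L, ∀ b ∈ R, a ≤ b) : DirectedOn (· ≤ ·) (withEndpointsIn L R) := by
  rintro s ⟨hs₁, hs₂⟩ t ⟨ht₁, ht₂⟩
  obtain ⟨a, ha, hsa, hta⟩ := hL _ hs₁ _ ht₁
  obtain ⟨b, hb, hsb, htb⟩ := hR _ hs₂ _ ht₂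
  exact ⟨⟨(a, b), hLR a ha b hb⟩, ⟨ha, hb⟩, ⟨hsa, hsb⟩, ⟨hta, htb⟩⟩

lemma isLUB_withEndpointsIn {p q : α} (hpq : p ≤ q) (hLne : L.Nonempty) (hRne : R.Nonempty)
    (hL : IsLUB L p) (hR : IsGLB R q) : IsLUB (withEndpointsIn L R) ⟨(p, q), hpq⟩ := by
  have hLR : ∀ a ∈ L, ∀ b ∈ R, a ≤ b := fun a ha b hb => (hL.1 ha).trans (hpq.trans (hR.1 hb))
  have hmem : ∀ a (ha : a ∈ L) b (hb : b ∈ R),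
      (⟨(a, b), hLR a ha b hb⟩ : IX α) ∈ withEndpointsIn L R := fun a ha b hb => ⟨ha, hb⟩
  refine ⟨fun s hs => ⟨hL.1 hs.1, hR.1 hs.2⟩,
    fun u hu => ⟨hL.2 fun a ha => ?_, hR.2 fun b hb => ?_⟩⟩
  · obtain ⟨b, hb⟩ := hRne
    exact (hu (hmem a ha b hb)).1
  · obtain ⟨a, ha⟩ := hLne
    exact (hu (hmem a ha b hb)).2

end Endpoints

section CompactIcc

variable [TopologicalSpace α] [ClosedIciTopology α] [ClosedIicTopology α] [CompactIccSpace α]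
  {S : Set (IX α)} {D : IX α}

lemma isLUB_left_image (hne : S.Nonempty) (hd : DirectedOn (· ≤ ·) S) (hD : IsLUB S D) :
    IsLUB (left '' S) D.left := by
  refine ⟨forall_mem_image.2 fun s hs => (hD.1 hs).1, fun u hu => ?_⟩
  have hright : D.right ∈ upperBounds (left '' S) :=
    forall_mem_image.2 fun s hs => (hD.1 hs).1.trans D.left_le_right
  obtain ⟨v, hv, hvu, hvD⟩ :=
    (directedOn_left_image hd).directedOn_ge_upperBounds (hne.image _) u hu _ hright
  have hDv : D ≤ ⟨(v, D.right), hvD⟩ :=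
    hD.2 fun s hs => ⟨hv (mem_image_of_mem _ hs), (hD.1 hs).2⟩
  exact hDv.1.trans hvu

lemma isGLB_right_image (hne : S.Nonempty) (hd : DirectedOn (· ≤ ·) S) (hD : IsLUB S D) :
    IsGLB (right '' S) D.right := by
  refine ⟨forall_mem_image.2 fun s hs => (hD.1 hs).2, fun l hl => ?_⟩
  have hleft : D.left ∈ lowerBounds (right '' S) :=
    forall_mem_image.2 fun s hs => D.left_le_right.trans (hD.1 hs).2
  obtain ⟨v, hv, hlv, hDv⟩ :=
    (directedOn_right_image hd).directedOn_le_lowerBounds (hne.image _) l hl _ hleft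
  have hDv' : D ≤ ⟨(D.left, v), hDv⟩ :=
    hD.2 fun s hs => ⟨(hD.1 hs).1, hv (mem_image_of_mem _ hs)⟩
  exact hlv.trans hDv'.2

end CompactIcc

end IX

-- `t` is the supremum of the directed set of intervals `[a, b]` with `a ≪ t.left`, `t.right ≪ b`.
lemma Bicontinuous.wayBelow_left_and_wayBelow_right {α : Type*} [PartialOrder α]
    (hb : Bicontinuous α) {s t : IX α} (hst : wayBelow s t) :
    wayBelow s.left t.left ∧ wayBelow t.right s.right := by
  have hLR : ∀ a ∈ {a | wayBelow a t.left}, ∀ b ∈ {b | wayBelow t.right b}, a ≤ b :=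
    fun a ha b hb => ha.le.trans (t.left_le_right.trans hb.le)
  obtain ⟨u, ⟨hu₁, hu₂⟩, hsu⟩ := hst.exists_le
    (IX.nonempty_withEndpointsIn (hb.1.nonempty_wayBelow _) (hb.nonempty_wayAbove _) hLR)
    (IX.directedOn_withEndpointsIn (hb.1.directedOn_wayBelow _) (hb.directedOn_wayAbove _) hLR)
    (IX.isLUB_withEndpointsIn t.left_le_right (hb.1.nonempty_wayBelow _)
      (hb.nonempty_wayAbove _) (hb.1.isLUB_wayBelow _) (hb.isGLB_wayAbove _))
  exact ⟨hsu.1.trans_wayBelow hu₁, hu₂.trans_le hsu.2⟩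

namespace GloballyHyperbolic

variable {α : Type*} [PartialOrder α] (h : GloballyHyperbolic α)
include h

lemma isLUB_left_image_and_isGLB_right_image {S : Set (IX α)} (hne : S.Nonempty)
    (hd : DirectedOn (· ≤ ·) S) {D : IX α} (hD : IsLUB S D) :
    IsLUB (IX.left '' S) D.left ∧ IsGLB (IX.right '' S) D.right := by
  let := intervalTop α
  have : ClosedIciTopology α := ⟨h.1.isClosed_Ici⟩
  have : ClosedIicTopology α := ⟨h.1.isClosed_Iic⟩
  have : CompactIccSpace α := ⟨fun {a b} => h.2 a b⟩
  exact ⟨IX.isLUB_left_image hne hd hD, IX.isGLB_right_image hne hd hD⟩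

lemma wayBelow_IX_iff {s t : IX α} :
    wayBelow s t ↔ wayBelow s.left t.left ∧ wayBelow t.right s.right := by
  refine ⟨h.1.wayBelow_left_and_wayBelow_right, fun ⟨hl, hr⟩ S hne hd D hD htD => ?_⟩
  obtain ⟨hL, hR⟩ := h.isLUB_left_image_and_isGLB_right_image hne hd hD
  obtain ⟨_, ⟨s₁, hs₁, rfl⟩, h₁⟩ :=
    hl (IX.left '' S) (hne.image _) (IX.directedOn_left_image hd) _ hL htD.1
  obtain ⟨_, ⟨s₂, hs₂, rfl⟩, h₂⟩ :=
    (h.1.2.1 _ _).1 hr _ (hne.image _) (IX.directedOn_right_image hd) _ hR htD.2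
  obtain ⟨z, hz, hs₁z, hs₂z⟩ := hd s₁ hs₁ s₂ hs₂
  exact ⟨z, hz, h₁.trans hs₁z.1, hs₂z.2.trans h₂⟩

lemma exists_countable_basis_IX {B : Set α} (hBc : B.Countable) (hB : PosetBasis B) :
    ∃ B' : Set (IX α), B'.Countable ∧ PosetBasis B' := by
  obtain ⟨C, hCc, hC⟩ := h.1.exists_countable_coBasis hBc hB
  refine ⟨IX.withEndpointsIn B C, (hBc.prod hCc).preimage Subtype.val_injective, fun D => ?_⟩
  obtain ⟨L, hL, hLne, hLd, hLlub⟩ := hB D.left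
  obtain ⟨R, hR, hRne, hRd, hRglb⟩ := hC D.right
  have hLR : ∀ a ∈ L, ∀ b ∈ R, a ≤ b :=
    fun a ha b hb => (hL ha).2.le.trans (D.left_le_right.trans (hR hb).2.le)
  refine ⟨IX.withEndpointsIn L R, fun s hs => ⟨⟨(hL hs.1).1, (hR hs.2).1⟩,
    h.wayBelow_IX_iff.2 ⟨(hL hs.1).2, (hR hs.2).2⟩⟩,
    IX.nonempty_withEndpointsIn hLne hRne hLR, IX.directedOn_withEndpointsIn hLd hRd hLR,
    IX.isLUB_withEndpointsIn D.left_le_right hLne hRne hLlub hRglb⟩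

lemma exists_countable_basis_of_IX {B' : Set (IX α)} (hB'c : B'.Countable)
    (hB' : PosetBasis B') : ∃ B : Set α, B.Countable ∧ PosetBasis B := by
  refine ⟨IX.left '' B', hB'c.image _, fun x => ?_⟩
  obtain ⟨T, hT, hTne, hTd, hTlub⟩ := hB' ⟨(x, x), le_rfl⟩
  refine ⟨IX.left '' T, ?_, hTne.image _, IX.directedOn_left_image hTd,
    (h.isLUB_left_image_and_isGLB_right_image hTne hTd hTlub).1⟩
  rintro _ ⟨t, ht, rfl⟩
  exact ⟨mem_image_of_mem _ (hT ht).1, (h.1.wayBelow_left_and_wayBelow_right (hT ht).2).1⟩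

end GloballyHyperbolic

/-- `X` has a countable basis iff `IX` is `ω`-continuous. -/
theorem countable_basis_iff {α : Type*} [PartialOrder α]
    (h : GloballyHyperbolic α) :
    (∃ B : Set α, B.Countable ∧ PosetBasis B) ↔
    (∃ B : Set (IX α), B.Countable ∧ PosetBasis B) :=
  ⟨fun ⟨_, hBc, hB⟩ => h.exists_countable_basis_IX hBc hB,
    fun ⟨_, hBc, hB⟩ => h.exists_countable_basis_of_IX hBc hB⟩
end

section
/- If (C, ≪) is an abstract basis that is interpolative in both directions, then the set int(C) = {(a,b) : a ≪ b} with relation (a,b) ≪ (c,d) iff a ≪ c and d ≪ b is an abstract basis. -/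
open Set

/-! Given finitely many intervals `(aᵢ, bᵢ) ≪ (a, b)`, interpolate `aᵢ ≪ c ≪ a` in the `-`
direction and `b ≪ d ≪ bᵢ` in the `+` direction; then `c ≪ a ≪ b ≪ d`, so `(c, d)` is an
interval lying between all `(aᵢ, bᵢ)` and `(a, b)`. -/

def intervalRel {β : Type*} (r : β → β → Prop) (p q : {p : β × β // r p.1 p.2}) : Prop :=
  r p.1.1 q.1.1 ∧ r q.1.2 p.1.2

section Interpolation

variable {β ι : Type*} {r : β → β → Prop}

theorem AbstractBasis.exists_between_of_forall_rel (h : AbstractBasis r) (F : Finset ι)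
    (f : ι → β) {x : β} (hF : ∀ i ∈ F, r (f i) x) : ∃ z, (∀ i ∈ F, r (f i) z) ∧ r z x := by
  classical
  simpa only [Finset.forall_mem_image] using h.2 (F.image f) x (Finset.forall_mem_image.2 hF)

theorem PlusInterpolative.exists_between_of_forall_rel (h : PlusInterpolative r) (F : Finset ι)
    (f : ι → β) {x : β} (hF : ∀ i ∈ F, r x (f i)) : ∃ z, r x z ∧ ∀ i ∈ F, r z (f i) := by
  classical
  simpa only [Finset.forall_mem_image] using h (F.image f) x (Finset.forall_mem_image.2 hF)

end Interpolation

theorem transitive_intervalRel {β : Type*} {r : β → β → Prop} (h : Transitive r) :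
    Transitive (intervalRel r) :=
  fun _ _ _ hpq hqs => ⟨h hpq.1 hqs.1, h hqs.2 hpq.2⟩

/-- the intervals of a `±`-interpolative abstract basis form an
abstract basis. -/
theorem int_abstractBasis {β : Type*} (r : β → β → Prop)
    (h1 : AbstractBasis r) (h2 : PlusInterpolative r) :
    AbstractBasis (fun p q : {p : β × β // r p.1 p.2} =>
      r p.1.1 q.1.1 ∧ r q.1.2 p.1.2) := by
  show AbstractBasis (intervalRel r)
  refine ⟨transitive_intervalRel h1.1, fun F x hF => ?_⟩
  obtain ⟨c, hFc, hcx⟩ :=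
    h1.exists_between_of_forall_rel F (fun p => p.1.1) fun p hp => (hF p hp).1
  obtain ⟨d, hxd, hdF⟩ :=
    h2.exists_between_of_forall_rel F (fun p => p.1.2) fun p hp => (hF p hp).2
  have hcd : r c d := h1.1 hcx (h1.1 x.2 hxd)
  exact ⟨⟨(c, d), hcd⟩, fun p hp => ⟨hFc p hp, hdF p hp⟩, hcx, hxd⟩
end

section
/- In an interval poset D, the relation a ≤ b on max(D) defined by: a ≤ b iff there is x ∈ D with left(x) = a and right(x) = b, is a partial order. -/
open Set

namespace IntervalPoset

variable {α : Type*} [PartialOrder α] (D : IntervalPoset α)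

theorem le_left (x : α) : x ≤ D.left x :=
  (D.glb x).1 (mem_insert _ _)

theorem le_right (x : α) : x ≤ D.right x :=
  (D.glb x).1 (mem_insert_of_mem _ rfl)

theorem left_eq_self_of_isMax {a : α} (ha : IsMax a) : D.left a = a :=
  (ha (D.le_left a)).antisymm (D.le_left a)

theorem right_eq_self_of_isMax {a : α} (ha : IsMax a) : D.right a = a :=
  (ha (D.le_right a)).antisymm (D.le_right a)

theorem eq_left_of_left_eq_right {z : α} (h : D.left z = D.right z) : z = D.left z := by
  have hglb := D.glb z
  rw [← h, pair_eq_singleton] at hglb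
  exact hglb.unique isGLB_singleton

theorem maxLe_refl {a : α} (ha : IsMax a) : maxLe D.left D.right a a :=
  ⟨a, D.left_eq_self_of_isMax ha, D.right_eq_self_of_isMax ha⟩

theorem maxLe_trans {a b c : α} (hab : maxLe D.left D.right a b)
    (hbc : maxLe D.left D.right b c) : maxLe D.left D.right a c := by
  obtain ⟨x, rfl, rfl⟩ := hab
  obtain ⟨y, hy, rfl⟩ := hbc
  obtain ⟨z, -, hzl, hzr⟩ := D.glue x y hy.symm
  exact ⟨z, hzl, hzr⟩

/-- Gluing an interval from `a` to `b` with one from `b` back to `a` gives an interval `z ≤ x`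
with both endpoints `a`, so `z = a`; then `a ≤ x ≤ left x = a` pins `x` down to the point `a`. -/
theorem maxLe_antisymm {a b : α} (hab : maxLe D.left D.right a b)
    (hba : maxLe D.left D.right b a) : a = b := by
  obtain ⟨x, rfl, rfl⟩ := hab
  obtain ⟨y, hy, hyr⟩ := hba
  obtain ⟨z, hz, hzl, hzr⟩ := D.glue x y hy.symm
  have hz_eq : z = D.left x := by
    rw [D.eq_left_of_left_eq_right (hzl.trans (hzr.trans hyr).symm), hzl]
  have hx_eq : x = D.left x :=
    (D.le_left x).antisymm (hz_eq ▸ hz.1 (mem_insert _ _))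
  rw [← D.right_eq_self_of_isMax (D.left_max x), ← hx_eq]

end IntervalPoset

/-- in an interval poset, the endpoint relation `≤` is a partial order
on the maximal elements. -/
theorem maxLe_partialOrder {α : Type*} [PartialOrder α] (D : IntervalPoset α) :
    (∀ a : α, IsMax a → maxLe D.left D.right a a) ∧
    (∀ a b : α, maxLe D.left D.right a b → maxLe D.left D.right b a → a = b) ∧
    (∀ a b c : α, maxLe D.left D.right a b → maxLe D.left D.right b c →
      maxLe D.left D.right a c) :=
  ⟨fun _ => D.maxLe_refl, fun _ _ => D.maxLe_antisymm, fun _ _ _ => D.maxLe_trans⟩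
end

section
/- Every interval poset D is order-isomorphic to the poset of closed intervals of (max(D), ≤) ordered by reverse inclusion, via x ↦ [left(x), right(x)]; in particular x ⊑ y in D iff left(x) ≤ left(y) ≤ right(y) ≤ right(x). -/
open Set

/-! Every element is the meet of its two endpoints, so it is determined by them. If
`left x ≤ left y` and `right y ≤ right x` are witnessed by `u` and `w`, gluing `u`, `y`, `w`
produces an element below `y` with the endpoints of `x`, which must then be `x`. -/

namespace IntervalPoset

variable {α : Type*} [PartialOrder α] (D : IntervalPoset α)

theorem eq_of_left_eq_of_right_eq {x y : α} (hl : D.left x = D.left y)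
    (hr : D.right x = D.right y) : x = y := by
  have hx := D.glb x
  rw [hl, hr] at hx
  exact hx.unique (D.glb y)

theorem maxLe_left_of_le {x p : α} (hp : IsMax p) (h : x ≤ p) :
    maxLe D.left D.right (D.left x) p :=
  let ⟨z, _, hzl, hzr⟩ := D.sub_left x p hp h
  ⟨z, hzl, hzr⟩

theorem maxLe_right_of_le {x p : α} (hp : IsMax p) (h : x ≤ p) :
    maxLe D.left D.right p (D.right x) :=
  let ⟨z, _, hzl, hzr⟩ := D.sub_right x p hp h
  ⟨z, hzl, hzr⟩

theorem maxLe_left_right (x : α) : maxLe D.left D.right (D.left x) (D.right x) :=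
  ⟨x, rfl, rfl⟩

theorem exists_le_le_of_right_eq_left {x y : α} (h : D.right x = D.left y) :
    ∃ z, z ≤ x ∧ z ≤ y ∧ D.left z = D.left x ∧ D.right z = D.right y :=
  let ⟨z, hz, hzl, hzr⟩ := D.glue x y h
  ⟨z, hz.1 (mem_insert _ _), hz.1 (mem_insert_of_mem _ rfl), hzl, hzr⟩

theorem le_of_maxLe {x y : α} (hl : maxLe D.left D.right (D.left x) (D.left y))
    (hr : maxLe D.left D.right (D.right y) (D.right x)) : x ≤ y := by
  obtain ⟨u, hul, hur⟩ := hl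
  obtain ⟨w, hwl, hwr⟩ := hr
  obtain ⟨z, -, hzy, hzl, hzr⟩ := D.exists_le_le_of_right_eq_left hur
  obtain ⟨t, htz, -, htl, htr⟩ := D.exists_le_le_of_right_eq_left (hzr.trans hwl.symm)
  have htx : t = x := D.eq_of_left_eq_of_right_eq (by rw [htl, hzl, hul]) (htr.trans hwr)
  exact htx ▸ htz.trans hzy

theorem le_iff_maxLe {x y : α} :
    x ≤ y ↔ maxLe D.left D.right (D.left x) (D.left y) ∧
      maxLe D.left D.right (D.left y) (D.right y) ∧
      maxLe D.left D.right (D.right y) (D.right x) :=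
  ⟨fun h => ⟨D.maxLe_left_of_le (D.left_max y) (h.trans (D.le_left y)),
      D.maxLe_left_right y, D.maxLe_right_of_le (D.right_max y) (h.trans (D.le_right y))⟩,
    fun ⟨hl, _, hr⟩ => D.le_of_maxLe hl hr⟩

end IntervalPoset

/-- an interval poset is order-isomorphic to the closed intervals of
`(max D, ≤)` under reverse inclusion, via `x ↦ [left x, right x]`. -/
theorem intervalPoset_iso {α : Type*} [PartialOrder α] (D : IntervalPoset α) :
    (∀ x y : α, x ≤ y ↔
      (maxLe D.left D.right (D.left x) (D.left y) ∧
       maxLe D.left D.right (D.left y) (D.right y) ∧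
       maxLe D.left D.right (D.right y) (D.right x))) ∧
    (∀ x y : α, D.left x = D.left y → D.right x = D.right y → x = y) ∧
    (∀ a b : α, maxLe D.left D.right a b → ∃ x : α, D.left x = a ∧ D.right x = b) :=
  ⟨fun _ _ => D.le_iff_maxLe, fun _ _ => D.eq_of_left_eq_of_right_eq, fun _ _ h => h⟩
end
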